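/- For d = 2 and λ₁ = λ ∈ (0,1), λ₂ = 1−λ, the λ-madogram ν(λ) = (1/2) R(X,(λ,1−λ)) satisfies ν(λ) = l(1/λ, 1/(1−λ))/(1 + l(1/λ, 1/(1−λ))) − (3/2)·1/((1+λ)(2−λ)). -/

import Mathlib

open MeasureTheory

/-- Unit Fréchet distribution function F(x) = exp(-1/x). -/
noncomputable def frechetCDF (x : ℝ) : ℝ := Real.exp (-x⁻¹)

open Filter Topology

/-! With `U = F(X₁)^a` and `V = F(X₂)^b` one has `|U - V| = 2 max(U, V) - U - V`. Each of `U`, `V`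
and `max(U, V)` has distribution function `u ↦ u^c` on `(0, 1)`, hence mean `c / (1 + c)` by the
layer-cake formula: `c = 1/a` and `c = 1/b` for the margins, and for the maximum max-stability gives
`P(max(U, V) ≤ u) = P(X₁ ≤ a s, X₂ ≤ b s)` with `s = 1 / -log u`, which equals `u^l(1/a, 1/b)`. -/

theorem frechetCDF_pos (x : ℝ) : 0 < frechetCDF x := Real.exp_pos _

theorem frechetCDF_lt_one {x : ℝ} (hx : 0 < x) : frechetCDF x < 1 :=
  Real.exp_lt_one_iff.2 (neg_neg_of_pos (inv_pos.2 hx))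

theorem frechetCDF_le_one {x : ℝ} (hx : 0 ≤ x) : frechetCDF x ≤ 1 :=
  Real.exp_le_one_iff.2 (neg_nonpos.2 (inv_nonneg.2 hx))

theorem measurable_frechetCDF : Measurable frechetCDF := by
  unfold frechetCDF; fun_prop

theorem tendsto_frechetCDF_nhdsGT_zero : Tendsto frechetCDF (𝓝[>] 0) (𝓝 0) :=
  Real.tendsto_exp_neg_atTop_nhds_zero.comp tendsto_inv_nhdsGT_zero

theorem tendsto_frechetCDF_atTop : Tendsto frechetCDF atTop (𝓝 1) := by
  have h := (Real.continuous_exp.tendsto _).comp (tendsto_inv_atTop_zero (𝕜 := ℝ)).neg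
  rw [neg_zero, Real.exp_zero] at h
  exact h

theorem frechetCDF_rpow_le_iff {e x u : ℝ} (hx : 0 < x) (hu : 0 < u) (hu1 : u < 1) :
    frechetCDF x ^ e ≤ u ↔ x ≤ e / -Real.log u := by
  have hlog : 0 < -Real.log u := neg_pos.2 (Real.log_neg hu hu1)
  rw [frechetCDF, ← Real.exp_mul, ← Real.le_log_iff_exp_le hu, neg_mul, neg_le,
    inv_mul_eq_div, le_div_iff₀ hx, le_div_iff₀ hlog, mul_comm]

section

variable {Ω : Type*} [MeasurableSpace Ω] {μ : Measure Ω}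

theorem integrable_of_ae_nonneg_of_ae_le_one [IsFiniteMeasure μ] {W : Ω → ℝ}
    (hW : Measurable W) (h0 : ∀ᵐ ω ∂μ, 0 ≤ W ω) (h1 : ∀ᵐ ω ∂μ, W ω ≤ 1) : Integrable W μ :=
  Integrable.of_bound hW.aestronglyMeasurable 1 <| by
    filter_upwards [h0, h1] with ω h0 h1
    rwa [Real.norm_eq_abs, abs_of_nonneg h0]

theorem integral_eq_div_of_measureReal_le_eq_rpow [IsProbabilityMeasure μ] {W : Ω → ℝ}
    (hW : Measurable W) (h0 : ∀ᵐ ω ∂μ, 0 ≤ W ω) (h1 : ∀ᵐ ω ∂μ, W ω ≤ 1) {c : ℝ} (hc : 0 < c)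
    (hcdf : ∀ u, 0 < u → u < 1 → μ.real {ω | W ω ≤ u} = u ^ c) :
    ∫ ω, W ω ∂μ = c / (c + 1) := by
  have hint := integrable_of_ae_nonneg_of_ae_le_one hW h0 h1
  have htail : ∀ᵐ t ∂volume.restrict (Set.Ioo (0 : ℝ) 1), μ.real {ω | t ≤ W ω} = 1 - t ^ c := by
    filter_upwards [meas_le_ae_eq_meas_lt μ (volume.restrict (Set.Ioo (0 : ℝ) 1)) W,
      ae_restrict_mem measurableSet_Ioo] with t hlt ht
    have hcompl : {ω | t < W ω} = {ω | W ω ≤ t}ᶜ := by ext; simp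
    have hmeas : MeasurableSet {ω | W ω ≤ t} := hW measurableSet_Iic
    rw [measureReal_def, hlt, ← measureReal_def, hcompl, probReal_compl_eq_one_sub hmeas,
      hcdf t ht.1 ht.2]
  rw [hint.integral_eq_integral_Ioc_meas_le h0 h1, integral_Ioc_eq_integral_Ioo,
    integral_congr_ae htail, ← integral_Ioc_eq_integral_Ioo,
    ← intervalIntegral.integral_of_le zero_le_one, intervalIntegral.integral_sub
      intervalIntegrable_const (intervalIntegral.intervalIntegrable_rpow' (by linarith)),
    integral_rpow (Or.inl (by linarith))]
  rw [Real.one_rpow, Real.zero_rpow (by linarith)]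
  field_simp
  simp

def HasUnitFrechetLaw (μ : Measure Ω) (Y : Ω → ℝ) : Prop :=
  ∀ t : ℝ, 0 < t → μ.real {ω | Y ω ≤ t} = frechetCDF t

/-- The paper's `l(a⁻¹, b⁻¹)`. -/
noncomputable def negLogJointCDF (μ : Measure Ω) (X₁ X₂ : Ω → ℝ) (a b : ℝ) : ℝ :=
  -Real.log (μ.real {ω | X₁ ω ≤ a ∧ X₂ ω ≤ b})

def IsMaxStable (μ : Measure Ω) (X₁ X₂ : Ω → ℝ) : Prop :=
  ∀ t : ℝ, 0 < t → ∀ x y : ℝ, 0 < x → 0 < y →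
    μ.real {ω | X₁ ω ≤ t * x ∧ X₂ ω ≤ t * y} ^ t = μ.real {ω | X₁ ω ≤ x ∧ X₂ ω ≤ y}

namespace HasUnitFrechetLaw

variable {Y : Ω → ℝ}

theorem ae_pos [IsFiniteMeasure μ] (hY : HasUnitFrechetLaw μ Y) : ∀ᵐ ω ∂μ, 0 < Y ω := by
  have hle : μ.real {ω | Y ω ≤ 0} ≤ 0 :=
    ge_of_tendsto tendsto_frechetCDF_nhdsGT_zero <|
      eventually_nhdsWithin_of_forall fun t (ht : 0 < t) =>
        (measureReal_mono fun ω hω => hω.trans ht.le).trans_eq (hY t ht)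
  have hnull : μ {ω | Y ω ≤ 0} = 0 :=
    (measureReal_eq_zero_iff).1 (le_antisymm hle measureReal_nonneg)
  simpa [ae_iff] using hnull

theorem measureReal_rpow_le [IsFiniteMeasure μ] (hY : HasUnitFrechetLaw μ Y) {e u : ℝ}
    (he : 0 < e) (hu : 0 < u) (hu1 : u < 1) :
    μ.real {ω | frechetCDF (Y ω) ^ e ≤ u} = u ^ e⁻¹ := by
  have hlog : 0 < -Real.log u := neg_pos.2 (Real.log_neg hu hu1)
  have hset : {ω | frechetCDF (Y ω) ^ e ≤ u} =ᵐ[μ] {ω | Y ω ≤ e / -Real.log u} := by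
    filter_upwards [hY.ae_pos] with ω hω
    exact propext (frechetCDF_rpow_le_iff hω hu hu1)
  rw [measureReal_congr hset, hY _ (div_pos he hlog), frechetCDF, Real.rpow_def_of_pos hu,
    inv_div]
  congr 1
  ring

theorem rpow_ae_le_one [IsFiniteMeasure μ] (hY : HasUnitFrechetLaw μ Y) {e : ℝ} (he : 0 ≤ e) :
    ∀ᵐ ω ∂μ, frechetCDF (Y ω) ^ e ≤ 1 := by
  filter_upwards [hY.ae_pos] with ω hω
  exact Real.rpow_le_one (frechetCDF_pos _).le (frechetCDF_le_one hω.le) he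

theorem integral_rpow [IsProbabilityMeasure μ] (hYm : Measurable Y) (hY : HasUnitFrechetLaw μ Y)
    {e : ℝ} (he : 0 < e) : ∫ ω, frechetCDF (Y ω) ^ e ∂μ = 1 / (1 + e) := by
  have hm : Measurable fun ω => frechetCDF (Y ω) ^ e := (measurable_frechetCDF.comp hYm).pow_const e
  rw [integral_eq_div_of_measureReal_le_eq_rpow hm
    (ae_of_all _ fun ω => (Real.rpow_pos_of_pos (frechetCDF_pos _) e).le)
    (hY.rpow_ae_le_one he.le) (inv_pos.2 he) fun u hu hu1 => hY.measureReal_rpow_le he hu hu1]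
  field_simp

end HasUnitFrechetLaw

namespace IsMaxStable

variable {X₁ X₂ : Ω → ℝ}

theorem measureReal_le_div (h : IsMaxStable μ X₁ X₂) {r a b : ℝ} (hr : 0 < r) (ha : 0 < a)
    (hb : 0 < b) :
    μ.real {ω | X₁ ω ≤ a / r ∧ X₂ ω ≤ b / r} = μ.real {ω | X₁ ω ≤ a ∧ X₂ ω ≤ b} ^ r := by
  rw [← h r⁻¹ (inv_pos.2 hr) a b ha hb, Real.rpow_inv_rpow measureReal_nonneg hr.ne']
  simp only [div_eq_inv_mul]

theorem measureReal_pos [IsProbabilityMeasure μ] (hX₂ : Measurable X₂)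
    (h₁ : HasUnitFrechetLaw μ X₁) (h₂ : HasUnitFrechetLaw μ X₂) (h : IsMaxStable μ X₁ X₂)
    {a b : ℝ} (ha : 0 < a) (hb : 0 < b) : 0 < μ.real {ω | X₁ ω ≤ a ∧ X₂ ω ≤ b} := by
  have hlarge : ∀ c, 0 < c → ∀ᶠ t in atTop, 1 / 2 < frechetCDF (t * c) := fun c hc =>
    (tendsto_frechetCDF_atTop.comp (tendsto_id.atTop_mul_const hc)).eventually
      (lt_mem_nhds (by norm_num))
  obtain ⟨t, ht, hta, htb⟩ := ((eventually_gt_atTop 0).and ((hlarge a ha).and (hlarge b hb))).exists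
  -- Bonferroni: `P(A ∩ B) ≥ P(A) + P(B) - 1`.
  have hmeas : MeasurableSet {ω | X₂ ω ≤ t * b} := hX₂ measurableSet_Iic
  have hinter := measureReal_union_add_inter (μ := μ) (s := {ω | X₁ ω ≤ t * a}) hmeas
  have hunion := measureReal_le_one (μ := μ) (s := {ω | X₁ ω ≤ t * a} ∪ {ω | X₂ ω ≤ t * b})
  rw [h₁ _ (mul_pos ht ha), h₂ _ (mul_pos ht hb)] at hinter
  have hpos : 0 < μ.real ({ω | X₁ ω ≤ t * a} ∩ {ω | X₂ ω ≤ t * b}) := by linarith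
  rw [← h t ht a b ha hb]
  exact Real.rpow_pos_of_pos hpos t

end IsMaxStable

section Madogram

variable [IsProbabilityMeasure μ] {X₁ X₂ : Ω → ℝ} {a b : ℝ}

theorem integral_max_frechetCDF_rpow (hX₁ : Measurable X₁) (hX₂ : Measurable X₂)
    (h₁ : HasUnitFrechetLaw μ X₁) (h₂ : HasUnitFrechetLaw μ X₂) (h : IsMaxStable μ X₁ X₂)
    (ha : 0 < a) (hb : 0 < b) :
    ∫ ω, max (frechetCDF (X₁ ω) ^ a) (frechetCDF (X₂ ω) ^ b) ∂μ
      = negLogJointCDF μ X₁ X₂ a b / (1 + negLogJointCDF μ X₁ X₂ a b) := by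
  set G := μ.real {ω | X₁ ω ≤ a ∧ X₂ ω ≤ b} with hG
  have hG0 : 0 < G := h.measureReal_pos hX₂ h₁ h₂ ha hb
  have hG1 : G < 1 :=
    (measureReal_mono fun ω hω => hω.1).trans_lt ((h₁ a ha).trans_lt (frechetCDF_lt_one ha))
  have hL : 0 < negLogJointCDF μ X₁ X₂ a b := neg_pos.2 (Real.log_neg hG0 hG1)
  have hcdf (u : ℝ) (hu : 0 < u) (hu1 : u < 1) :
      μ.real {ω | max (frechetCDF (X₁ ω) ^ a) (frechetCDF (X₂ ω) ^ b) ≤ u}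
        = u ^ negLogJointCDF μ X₁ X₂ a b := by
    have hlog : 0 < -Real.log u := neg_pos.2 (Real.log_neg hu hu1)
    have hset : {ω | max (frechetCDF (X₁ ω) ^ a) (frechetCDF (X₂ ω) ^ b) ≤ u}
        =ᵐ[μ] {ω | X₁ ω ≤ a / -Real.log u ∧ X₂ ω ≤ b / -Real.log u} := by
      filter_upwards [h₁.ae_pos, h₂.ae_pos] with ω hω₁ hω₂
      exact propext (max_le_iff.trans (and_congr (frechetCDF_rpow_le_iff hω₁ hu hu1)
        (frechetCDF_rpow_le_iff hω₂ hu hu1)))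
    rw [measureReal_congr hset, h.measureReal_le_div hlog ha hb, negLogJointCDF, ← hG,
      Real.rpow_def_of_pos hG0, Real.rpow_def_of_pos hu]
    ring_nf
  have hm : Measurable fun ω => max (frechetCDF (X₁ ω) ^ a) (frechetCDF (X₂ ω) ^ b) :=
    ((measurable_frechetCDF.comp hX₁).pow_const a).max
      ((measurable_frechetCDF.comp hX₂).pow_const b)
  have h0 : ∀ᵐ ω ∂μ, 0 ≤ max (frechetCDF (X₁ ω) ^ a) (frechetCDF (X₂ ω) ^ b) :=
    ae_of_all _ fun ω => le_max_of_le_left (Real.rpow_pos_of_pos (frechetCDF_pos _) a).le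
  have h1 : ∀ᵐ ω ∂μ, max (frechetCDF (X₁ ω) ^ a) (frechetCDF (X₂ ω) ^ b) ≤ 1 := by
    filter_upwards [h₁.rpow_ae_le_one ha.le, h₂.rpow_ae_le_one hb.le] with ω hω₁ hω₂
    exact max_le hω₁ hω₂
  rw [integral_eq_div_of_measureReal_le_eq_rpow hm h0 h1 hL hcdf, add_comm]

theorem integral_abs_frechetCDF_rpow_sub (hX₁ : Measurable X₁) (hX₂ : Measurable X₂)
    (h₁ : HasUnitFrechetLaw μ X₁) (h₂ : HasUnitFrechetLaw μ X₂) (h : IsMaxStable μ X₁ X₂)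
    (ha : 0 < a) (hb : 0 < b) :
    ∫ ω, |frechetCDF (X₁ ω) ^ a - frechetCDF (X₂ ω) ^ b| ∂μ
      = 2 * (negLogJointCDF μ X₁ X₂ a b / (1 + negLogJointCDF μ X₁ X₂ a b))
        - 1 / (1 + a) - 1 / (1 + b) := by
  have habs (x y : ℝ) : |x - y| = 2 * max x y - x - y := by
    have := min_add_max x y
    rw [abs_sub_comm, ← max_sub_min_eq_abs]
    linarith
  have hm₁ : Measurable fun ω => frechetCDF (X₁ ω) ^ a :=
    (measurable_frechetCDF.comp hX₁).pow_const a
  have hm₂ : Measurable fun ω => frechetCDF (X₂ ω) ^ b :=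
    (measurable_frechetCDF.comp hX₂).pow_const b
  have hnonneg (c x : ℝ) : 0 ≤ frechetCDF x ^ c := (Real.rpow_pos_of_pos (frechetCDF_pos x) c).le
  have hi₁ := integrable_of_ae_nonneg_of_ae_le_one hm₁ (ae_of_all _ fun _ => hnonneg _ _)
    (h₁.rpow_ae_le_one ha.le)
  have hi₂ := integrable_of_ae_nonneg_of_ae_le_one hm₂ (ae_of_all _ fun _ => hnonneg _ _)
    (h₂.rpow_ae_le_one hb.le)
  have hi : Integrable (fun ω => max (frechetCDF (X₁ ω) ^ a) (frechetCDF (X₂ ω) ^ b)) μ :=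
    hi₁.sup hi₂
  simp_rw [habs]
  rw [integral_sub (by exact (hi.const_mul 2).sub hi₁) hi₂, integral_sub (hi.const_mul 2) hi₁,
    integral_const_mul, integral_max_frechetCDF_rpow hX₁ hX₂ h₁ h₂ h ha hb,
    h₁.integral_rpow hX₁ ha, h₂.integral_rpow hX₂ hb]

end Madogram

end

/-- The λ-madogram formula: ν(λ) = (1/2)E|F(X₁)^λ − F(X₂)^{1−λ}|
equals l(1/λ,1/(1−λ))/(1+l(1/λ,1/(1−λ))) − (3/2)/((1+λ)(2−λ)). -/
theorem stmt9
    {Ω : Type*} [MeasurableSpace Ω] (μ : Measure Ω) [IsProbabilityMeasure μ]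
    (X₁ X₂ : Ω → ℝ) (hX₁ : Measurable X₁) (hX₂ : Measurable X₂)
    (hmarg₁ : ∀ t : ℝ, 0 < t → (μ {ω | X₁ ω ≤ t}).toReal = frechetCDF t)
    (hmarg₂ : ∀ t : ℝ, 0 < t → (μ {ω | X₂ ω ≤ t}).toReal = frechetCDF t)
    (hms : ∀ t : ℝ, 0 < t → ∀ x y : ℝ, 0 < x → 0 < y →
      ((μ {ω | X₁ ω ≤ t * x ∧ X₂ ω ≤ t * y}).toReal) ^ t
        = (μ {ω | X₁ ω ≤ x ∧ X₂ ω ≤ y}).toReal)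
    (l : ℝ → ℝ → ℝ)
    (hl : ∀ x y : ℝ, 0 ≤ x → 0 ≤ y →
      l x y = - Real.log ((μ {ω | (0 < x → X₁ ω ≤ x⁻¹) ∧ (0 < y → X₂ ω ≤ y⁻¹)}).toReal))
    (lam : ℝ) (hlam₀ : 0 < lam) (hlam₁ : lam < 1) :
    (1 / 2) * ∫ ω, |frechetCDF (X₁ ω) ^ lam - frechetCDF (X₂ ω) ^ (1 - lam)| ∂μ
      = l lam⁻¹ (1 - lam)⁻¹ / (1 + l lam⁻¹ (1 - lam)⁻¹)
        - (3 / 2) * (1 / ((1 + lam) * (2 - lam))) := by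
  have hlam : 0 < 1 - lam := sub_pos.2 hlam₁
  have hL : l lam⁻¹ (1 - lam)⁻¹ = negLogJointCDF μ X₁ X₂ lam (1 - lam) := by
    rw [hl _ _ (inv_nonneg.2 hlam₀.le) (inv_nonneg.2 hlam.le), negLogJointCDF]
    simp [hlam₀, hlam, measureReal_def]
  have hsum : 1 / (1 + lam) + 1 / (1 + (1 - lam)) = 3 * (1 / ((1 + lam) * (2 - lam))) := by
    have h2 : 2 - lam ≠ 0 := by linarith
    rw [show 1 + (1 - lam) = 2 - lam by ring]
    field_simp
    ring
  rw [integral_abs_frechetCDF_rpow_sub hX₁ hX₂ hmarg₁ hmarg₂ hms hlam₀ hlam, hL]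
  linarith
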